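/- arXiv:quant-ph/0602108 — 3 statements merged into one kernel-verified Lean document; each statement's English description precedes it below -/
import Mathlib

section
/- Let φ, θ be 2×2 complex matrices and ψ : Fin 2 → Fin 2 → Fin 2 → ℂ a rank-three tensor. Suppose ∑_{α,β} φ_{α,β} ψ_{α,β,γ} = 0 for all γ, and ∑_{β,γ} θ_{β,γ} ψ_{α,β,γ} = 0 for all α. Define ω = φ ε θ where ε is the 2×2 antisymmetric matrix with ε_{0,1}=1, ε_{1,0}=-1, ε_{0,0}=ε_{1,1}=0. Then ∑_{α,γ} ω_{α,γ} ψ_{α,β,γ} = 0 for all β. -/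
/-!
Contracting ψ with ω = φ ε θ over the outer indices equals ε applied to a combination of the two
given contractions, `θ *ᵥ A - φᵀ *ᵥ B` with `A γ = ∑ φ α β ψ α β γ` and `B α = ∑ θ β γ ψ α β γ`.
The reason is the Schouten identity `ε i j δ k l + ε j k δ i l + ε k i δ j l = 0`, i.e. the vanishing of
totally antisymmetric 3-tensors in dimension 2. So if A and B vanish, so does the ω-contraction.
-/

open Finset Matrix

def epsilon (R : Type*) [Ring R] : Matrix (Fin 2) (Fin 2) R := of ![![0, 1], ![-1, 0]]

theorem sum_mul_epsilon_mul_apply_mul {R : Type*} [CommRing R]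
    (φ θ : Matrix (Fin 2) (Fin 2) R) (ψ : Fin 2 → Fin 2 → Fin 2 → R) (β : Fin 2) :
    ∑ α, ∑ γ, (φ * epsilon R * θ) α γ * ψ α β γ =
      (epsilon R *ᵥ (θ *ᵥ (fun γ => ∑ α, ∑ β', φ α β' * ψ α β' γ)
        - φᵀ *ᵥ (fun α => ∑ δ, ∑ γ, θ δ γ * ψ α δ γ))) β := by
  fin_cases β <;> simp [Fin.sum_univ_two, mul_apply, mulVec, dotProduct, epsilon] <;> ring

/-- Lemma 1 (key local rule) of quantum 2-SAT: if a rank-three tensor ψ is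
annihilated by contraction with φ on indices (1,2) and with θ on indices (2,3),
then it is annihilated by ω = φ ε θ on indices (1,3). -/
theorem stmt_0 (φ θ ε ω : Matrix (Fin 2) (Fin 2) ℂ)
    (ψ : Fin 2 → Fin 2 → Fin 2 → ℂ)
    (hε : ε = Matrix.of ![![0, 1], ![-1, 0]])
    (hφ : ∀ γ, ∑ α, ∑ β, φ α β * ψ α β γ = 0)
    (hθ : ∀ α, ∑ β, ∑ γ, θ β γ * ψ α β γ = 0)
    (hω : ω = φ * ε * θ) :
    ∀ β, ∑ α, ∑ γ, ω α γ * ψ α β γ = 0 := by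
  intro β
  have hA : (fun γ => ∑ α, ∑ β', φ α β' * ψ α β' γ) = 0 := funext hφ
  have hB : (fun α => ∑ δ, ∑ γ, θ δ γ * ψ α δ γ) = 0 := funext hθ
  rw [hω, hε, ← epsilon, sum_mul_epsilon_mul_apply_mul, hA, hB]
  simp
end

section
/- In the implication graph G of a classical 2-SAT instance, if for every literal l the vertices l and ¬l lie in different strongly connected components, then the instance has a satisfying assignment. -/
/-- A literal: a variable together with a polarity (`true` = the variable itself,
`false` = its negation). -/
abbrev Lit (n : ℕ) := Fin n × Bool

/-- Negation of a literal. -/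
def Lit.neg {n : ℕ} (l : Lit n) : Lit n := (l.1, !l.2)

/-- A literal evaluates to true under an assignment `x`. -/
def Lit.eval {n : ℕ} (x : Fin n → Bool) (l : Lit n) : Prop := x l.1 = l.2

/-- An assignment satisfies a 2-SAT instance (a list of clauses `l ∨ l'`). -/
def Sat {n : ℕ} (cs : List (Lit n × Lit n)) (x : Fin n → Bool) : Prop :=
  ∀ c ∈ cs, Lit.eval x c.1 ∨ Lit.eval x c.2

/-- Edges of the implication graph: for each clause `l ∨ l'`, edges
`¬l → l'` and `¬l' → l`. -/
def Edge {n : ℕ} (cs : List (Lit n × Lit n)) (u v : Lit n) : Prop :=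
  ∃ c ∈ cs, (u = Lit.neg c.1 ∧ v = c.2) ∨ (u = Lit.neg c.2 ∧ v = c.1)

/-- Directed paths in the implication graph. -/
def IPath {n : ℕ} (cs : List (Lit n × Lit n)) : Lit n → Lit n → Prop :=
  Relation.ReflTransGen (Edge cs)

/-- The SCC setoid on literals. -/
def SccSetoid {n : ℕ} (cs : List (Lit n × Lit n)) : Setoid (Lit n) where
  r l l' := IPath cs l l' ∧ IPath cs l' l
  iseqv := ⟨fun _ => ⟨.refl, .refl⟩, fun ⟨a, b⟩ => ⟨b, a⟩,
    fun ⟨a, b⟩ ⟨c, d⟩ => ⟨a.trans c, d.trans b⟩⟩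

/-- If no literal lies in the same strongly connected component of the
implication graph as its negation, then the 2-SAT instance is satisfiable. -/
theorem stmt_11 {n : ℕ} (cs : List (Lit n × Lit n))
    (h : ∀ l : Lit n, ¬ (IPath cs l (Lit.neg l) ∧ IPath cs (Lit.neg l) l)) :
    ∃ x : Fin n → Bool, Sat cs x := by
  classical
  let S := SccSetoid cs
  let Q := Quotient S
  let q : Lit n → Q := Quotient.mk S
  -- the reachability order on the quotient
  let r : Q → Q → Prop := Quotient.lift₂ (fun a b => IPath cs a b)
    (by
      rintro a b a' b' ⟨ha1, ha2⟩ ⟨hb1, hb2⟩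
      exact propext ⟨fun p => ha2.trans (p.trans hb1), fun p => ha1.trans (p.trans hb2)⟩)
  have hr : ∀ a b : Lit n, r (q a) (q b) ↔ IPath cs a b := fun a b => Iff.rfl
  haveI : IsPartialOrder Q r :=
    { refl := fun x => by induction x using Quotient.ind; exact Relation.ReflTransGen.refl
      trans := fun x y z => by
        induction x using Quotient.ind; induction y using Quotient.ind; induction z using Quotient.ind
        exact fun p1 p2 => p1.trans p2
      antisymm := fun x y => by
        induction x using Quotient.ind; induction y using Quotient.ind
        exact fun p1 p2 => Quotient.sound ⟨p1, p2⟩ }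
  obtain ⟨s, hlin, hrs⟩ := extend_partialOrder r
  haveI := hlin
  -- key: q l ≠ q (neg l)
  have hne : ∀ l : Lit n, q l ≠ q l.neg := by
    intro l hl
    exact h l (Quotient.exact hl)
  -- assignment
  let x : Fin n → Bool := fun v => decide (s (q (v, false)) (q (v, true)))
  refine ⟨x, fun c hc => ?_⟩
  -- T l ↔ eval x l
  have hT : ∀ l : Lit n, Lit.eval x l ↔ s (q l.neg) (q l) := by
    rintro ⟨v, b⟩
    cases b
    · simp only [Lit.eval, Lit.neg, x, decide_eq_false_iff_not]
      constructor
      · intro hns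
        rcases Std.Total.total (r := s) (q ((v, false) : Lit n)) (q ((v, true) : Lit n)) with h1 | h1
        · exact absurd h1 hns
        · exact h1
      · intro hs hs'
        exact hne (v, false) (Std.Antisymm.antisymm (r := s) _ _ hs' hs)
    · simp only [Lit.eval, Lit.neg, x, decide_eq_true_eq]
      exact Iff.rfl
  by_contra hcon
  push_neg at hcon
  obtain ⟨hna, hnb⟩ := hcon
  rw [hT] at hna hnb
  -- not s (q a.neg) (q a) means s (q a) (q a.neg)
  have ha : s (q c.1) (q c.1.neg) := (Std.Total.total (r := s) _ _).resolve_right hna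
  have hb : s (q c.2) (q c.2.neg) := (Std.Total.total (r := s) _ _).resolve_right hnb
  -- edges from clause
  have e1 : IPath cs c.1.neg c.2 := Relation.ReflTransGen.single ⟨c, hc, Or.inl ⟨rfl, rfl⟩⟩
  have e2 : IPath cs c.2.neg c.1 := Relation.ReflTransGen.single ⟨c, hc, Or.inr ⟨rfl, rfl⟩⟩
  have s1 : s (q c.1.neg) (q c.2) := hrs _ _ ((hr _ _).mpr e1)
  have s2 : s (q c.2.neg) (q c.1) := hrs _ _ ((hr _ _).mpr e2)
  have trans : ∀ a b c : Q, s a b → s b c → s a c := fun a b c => IsTrans.trans a b c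
  exact hna (trans _ _ _ s1 (trans _ _ _ hb s2))
end

section
/- Define the six clock-constraint Hamiltonians H_clock^{(1)},...,H_clock^{(6)} on (ℂ⁴)^{⊗L} (L ≥ 1) with single-particle basis {u, d, a1, a2} as in the quantum 4-SAT construction. Then a standard basis state |s₁,...,s_L⟩ (s_j ∈ {u,d,a1,a2}) is annihilated by all six Hamiltonians if and only if it is of the form |d,...,d, a, u,...,u⟩ with exactly one particle in state a ∈ {a1, a2} at some position j, dead particles before it and unborn particles after it. Consequently the zero subspace of H_clock restricted to basis states has dimension exactly 2L. -/
/-- Single-particle clock states: unborn, dead, active phase 1, active phase 2. -/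
def unb : Fin 4 := 0
def ded : Fin 4 := 1
def act1 : Fin 4 := 2
def act2 : Fin 4 := 3

/-- A clock particle is active. -/
def IsActive (s : Fin 4) : Prop := s = act1 ∨ s = act2

/-- A standard basis state of the clock register is annihilated by all six
clock-constraint Hamiltonians iff it satisfies these six combinatorial
conditions (the Hamiltonians are diagonal sums of projectors onto the
violating configurations). -/
def LegalClock (L : ℕ) (hL : 0 < L) (s : Fin L → Fin 4) : Prop :=
  (s ⟨0, hL⟩ ≠ unb) ∧
  (s ⟨L - 1, by omega⟩ ≠ ded) ∧
  (∀ j k : Fin L, j < k → ¬ (IsActive (s j) ∧ IsActive (s k))) ∧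
  (∀ j k : Fin L, j < k → ¬ ((IsActive (s j) ∨ s j = unb) ∧ s k = ded)) ∧
  (∀ j k : Fin L, j < k → ¬ (s j = unb ∧ (IsActive (s k) ∨ s k = ded))) ∧
  (∀ j : Fin L, ∀ h : (j : ℕ) + 1 < L, ¬ (s j = ded ∧ s ⟨(j : ℕ) + 1, h⟩ = unb))

/-- A string of the form d,...,d,a,u,...,u with a single active particle. -/
def IsDominoString (L : ℕ) (s : Fin L → Fin 4) : Prop :=
  ∃ j : Fin L, IsActive (s j) ∧ (∀ k : Fin L, k < j → s k = ded) ∧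
    (∀ k : Fin L, j < k → s k = unb)
/-!
A legal string must contain an active particle: otherwise it is a word in `d, u` that starts with
`d` and ends with `u`, so it contains the forbidden adjacent pair `d u`. Given an active site `j`,
the pairwise constraints force `d` to its left and `u` to its right. Conversely such a string
violates none of the constraints, and it is determined by the position `j` and the value
`a ∈ {a1, a2}` at that position, giving `2L` of them.
-/

instance : DecidablePred IsActive := fun a => inferInstanceAs (Decidable (a = act1 ∨ a = act2))

lemma eq_unb_or_eq_ded_or_isActive (a : Fin 4) : a = unb ∨ a = ded ∨ IsActive a := by
  revert a; decide

lemma card_isActive : Nat.card {a : Fin 4 // IsActive a} = 2 := by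
  rw [Nat.card_eq_fintype_card]; rfl

def domino {L : ℕ} (j : Fin L) (a : Fin 4) : Fin L → Fin 4 :=
  fun k => if k < j then ded else if k = j then a else unb

section

variable {L : ℕ} {hL : 0 < L} {s : Fin L → Fin 4} {j j' k : Fin L} {a a' : Fin 4}

lemma LegalClock.exists_isActive (h : LegalClock L hL s) : ∃ j, IsActive (s j) := by
  obtain ⟨hfirst, hlast, -, -, -, hdu⟩ := h
  by_contra! hnone
  have hded : ∀ i (hi : i < L), s ⟨i, hi⟩ = ded := by
    intro i
    induction i with
    | zero =>
      intro hi
      rcases eq_unb_or_eq_ded_or_isActive (s ⟨0, hi⟩) with h | h | h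
      · exact absurd h hfirst
      · exact h
      · exact absurd h (hnone _)
    | succ i ih =>
      intro hi
      rcases eq_unb_or_eq_ded_or_isActive (s ⟨i + 1, hi⟩) with h | h | h
      · exact absurd ⟨ih (by omega), h⟩ (hdu ⟨i, by omega⟩ hi)
      · exact h
      · exact absurd h (hnone _)
  exact hlast (hded _ _)

lemma LegalClock.isDominoString (h : LegalClock L hL s) : IsDominoString L s := by
  obtain ⟨j, hj⟩ := h.exists_isActive
  obtain ⟨-, -, hact, hded, hunb, -⟩ := h
  refine ⟨j, hj, fun k hk => ?_, fun k hk => ?_⟩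
  · rcases eq_unb_or_eq_ded_or_isActive (s k) with h | h | h
    · exact absurd ⟨h, Or.inl hj⟩ (hunb k j hk)
    · exact h
    · exact absurd ⟨h, hj⟩ (hact k j hk)
  · rcases eq_unb_or_eq_ded_or_isActive (s k) with h | h | h
    · exact h
    · exact absurd ⟨Or.inl hj, h⟩ (hded j k hk)
    · exact absurd ⟨hj, h⟩ (hact j k hk)

lemma domino_self : domino j a j = a := by simp [domino]

lemma domino_eq_ded_iff (ha : IsActive a) : domino j a k = ded ↔ k < j := by
  rcases ha with rfl | rfl <;> unfold domino <;> split_ifs <;> simp_all [act1, act2, ded, unb]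

lemma domino_eq_unb_iff (ha : IsActive a) : domino j a k = unb ↔ j < k := by
  rcases ha with rfl | rfl <;> unfold domino <;> split_ifs <;>
    simp_all [act1, act2, ded, unb] <;> omega

lemma isActive_domino_iff (ha : IsActive a) : IsActive (domino j a k) ↔ k = j := by
  rcases ha with rfl | rfl <;> unfold domino <;> split_ifs <;>
    simp_all [IsActive, act1, act2, ded, unb] <;> omega

lemma domino_inj (ha : IsActive a) (ha' : IsActive a') :
    domino j a = domino j' a' ↔ j = j' ∧ a = a' := by
  refine ⟨fun h => ?_, fun ⟨hj, ha⟩ => hj ▸ ha ▸ rfl⟩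
  have hj : j = j' := (isActive_domino_iff ha').1 (h ▸ (isActive_domino_iff ha).2 rfl)
  subst hj
  exact ⟨rfl, by simpa only [domino_self] using congrFun h j⟩

lemma isDominoString_iff_exists_eq_domino :
    IsDominoString L s ↔ ∃ j a, IsActive a ∧ s = domino j a := by
  constructor
  · rintro ⟨j, hj, hded, hunb⟩
    refine ⟨j, s j, hj, funext fun k => ?_⟩
    rcases lt_trichotomy k j with hk | rfl | hk
    · simp [domino, hk, hded k hk]
    · simp [domino]
    · simp [domino, hk.not_gt, hk.ne', hunb k hk]
  · rintro ⟨j, a, ha, rfl⟩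
    exact ⟨j, domino_self ▸ ha, fun k => (domino_eq_ded_iff ha).2,
      fun k => (domino_eq_unb_iff ha).2⟩

lemma legalClock_domino (hL : 0 < L) (ha : IsActive a) : LegalClock L hL (domino j a) := by
  simp only [LegalClock, ne_eq, domino_eq_ded_iff ha, domino_eq_unb_iff ha, isActive_domino_iff ha,
    Fin.lt_def, Fin.ext_iff]
  refine ⟨?_, ?_, ?_, ?_, ?_, ?_⟩ <;> intros <;> omega

lemma legalClock_iff_isDominoString (hL : 0 < L) (s : Fin L → Fin 4) :
    LegalClock L hL s ↔ IsDominoString L s := by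
  refine ⟨LegalClock.isDominoString, fun h => ?_⟩
  obtain ⟨j, a, ha, rfl⟩ := isDominoString_iff_exists_eq_domino.1 h
  exact legalClock_domino hL ha

lemma bijective_domino (hL : 0 < L) :
    Function.Bijective fun p : Fin L × {a : Fin 4 // IsActive a} =>
      (⟨domino p.1 p.2, legalClock_domino hL p.2.2⟩ : {s // LegalClock L hL s}) := by
  refine ⟨fun ⟨j, a, ha⟩ ⟨j', a', ha'⟩ h => ?_, fun ⟨s, hs⟩ => ?_⟩
  · obtain ⟨rfl, rfl⟩ := (domino_inj ha ha').1 (congrArg Subtype.val h)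
    rfl
  · obtain ⟨j, a, ha, rfl⟩ :=
      isDominoString_iff_exists_eq_domino.1 ((legalClock_iff_isDominoString hL s).1 hs)
    exact ⟨(j, ⟨a, ha⟩), rfl⟩

end

/-- The legal clock states are exactly the strings d,...,d,a,u,...,u with one
active particle (a ∈ {a1, a2}), dead particles before it and unborn particles
after it; consequently there are exactly 2L of them. -/
theorem stmt_14 (L : ℕ) (hL : 0 < L) :
    (∀ s : Fin L → Fin 4, LegalClock L hL s ↔ IsDominoString L s) ∧
    Nat.card {s : Fin L → Fin 4 // LegalClock L hL s} = 2 * L := by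
  refine ⟨legalClock_iff_isDominoString hL, ?_⟩
  rw [← Nat.card_congr (Equiv.ofBijective _ (bijective_domino hL)), Nat.card_prod, Nat.card_fin,
    card_isActive, mul_comm]
end
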